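/- arXiv:1702.00291 — 10 statements merged into one kernel-verified Lean document; each statement's English description precedes it below -/
import Mathlib

section
/- Let p be a prime and R a commutative ring such that p·1_R lies in the Jacobson radical of R. Let 𝒜 ⊆ W(R) be an ideal of the ring of p-typical Witt vectors such that the ideal of R generated by the image w_0(𝒜) of 𝒜 under the zeroth ghost component is all of R. Then 𝒜 = W(R). -/
/-!
An element `x` of `W(R)` whose constant coefficient is a unit is invertible modulo
`V¹W(R)`, and an inverse modulo `VⁿW(R)` (`n ≥ 1`) can be corrected to one modulo `Vⁿ⁺¹W(R)`:
writing the error as `Vⁿr`, one needs `s` with `r₀ + s₀ + pⁿr₀s₀ = 0`, which exists because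
`1 + pⁿr₀` is a unit when `p` lies in the Jacobson radical. Inverses modulo `VⁿW(R)` are unique,
so they glue to an inverse of `x`. An element of `𝒜` with zeroth ghost component `1` is thus a unit.
-/

namespace WittVector

open Function

variable {p : ℕ} [Fact p.Prime] {R : Type*} [CommRing R]

local notation "𝕎" => WittVector p

theorem ghostComponent_zero_eq_constantCoeff :
    (ghostComponent 0 : 𝕎 R →+* R) = constantCoeff := by
  ext x
  rw [ghostComponent_apply, wittPolynomial_zero, MvPolynomial.aeval_X, constantCoeff_apply]

theorem iterate_frobenius_iterate_verschiebung (x : 𝕎 R) (n : ℕ) :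
    frobenius^[n] (verschiebung^[n] x) = x * p ^ n := by
  induction n generalizing x with
  | zero => simp
  | succ n ih =>
    rw [iterate_succ_apply', iterate_succ_apply, ih, map_mul, frobenius_verschiebung, map_pow,
      map_natCast]
    ring

theorem iterate_verschiebung_mul_iterate_verschiebung (x y : 𝕎 R) (n : ℕ) :
    verschiebung^[n] x * verschiebung^[n] y = verschiebung^[n] (x * y * (p : 𝕎 R) ^ n) := by
  rw [iterate_verschiebung_mul_left, iterate_frobenius_iterate_verschiebung, mul_assoc]

theorem iterate_verschiebung_mem_ker_truncate_succ {x : 𝕎 R} (hx : x.coeff 0 = 0) (n : ℕ) :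
    verschiebung^[n] x ∈ RingHom.ker (truncate (p := p) (R := R) (n + 1)) := by
  rw [mem_ker_truncate]
  intro i hi
  rcases Nat.lt_succ_iff_lt_or_eq.mp hi with hi | rfl
  · exact iterate_verschiebung_coeff_eq_zero x hi
  · simpa [hx] using iterate_verschiebung_coeff x i 0

theorem isUnit_of_forall_isUnit_truncate {x : 𝕎 R} (h : ∀ n, IsUnit (truncate n x)) :
    IsUnit x := by
  have exists_inv (n : ℕ) : ∃ y, truncate n (x * y) = 1 := by
    obtain ⟨u, hu⟩ := (h n).exists_right_inv
    obtain ⟨y, rfl⟩ := truncate_surjective p n R u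
    exact ⟨y, by rw [map_mul, hu]⟩
  choose y hy using exists_inv
  have compat {m n : ℕ} (hnm : n ≤ m) : truncate n (y m) = truncate n (y n) := by
    refine (h n).mul_left_cancel ?_
    rw [← map_mul, ← map_mul, hy, ← TruncatedWittVector.truncate_wittVector_truncate hnm, hy,
      map_one]
  let w : 𝕎 R := mk p fun i => (y (i + 1)).coeff i
  have hw (n : ℕ) : truncate n w = truncate n (y n) := by
    ext ⟨i, hi⟩
    simpa [w] using congrArg (·.coeff ⟨i, i.lt_add_one⟩) (compat hi).symm
  refine IsUnit.of_mul_eq_one w ?_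
  rw [← sub_eq_zero, ← Ideal.mem_bot, ← TruncatedWittVector.iInf_ker_truncate, Ideal.mem_iInf]
  intro n
  rw [RingHom.mem_ker, map_sub, map_mul, hw, ← map_mul, hy, map_one, sub_self]

theorem isUnit_truncate_one {x : 𝕎 R} (hx : IsUnit (x.coeff 0)) : IsUnit (truncate 1 x) := by
  obtain ⟨u, hu⟩ := hx.exists_right_inv
  refine IsUnit.of_mul_eq_one (truncate 1 (teichmuller p u)) ?_
  rw [← map_mul, ← sub_eq_zero, ← map_one (truncate 1), ← map_sub, ← RingHom.mem_ker,
    mem_ker_truncate]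
  intro i hi
  obtain rfl : i = 0 := Nat.lt_one_iff.mp hi
  rw [← constantCoeff_apply, map_sub, map_mul, map_one, constantCoeff_apply, constantCoeff_apply,
    teichmuller_coeff_zero, hu, sub_self]

variable (hp : (p : R) ∈ Ideal.jacobson ⊥)
include hp

theorem isUnit_truncate_succ_one_add {n : ℕ} (hn : n ≠ 0) {η : 𝕎 R}
    (hη : η ∈ RingHom.ker (truncate n)) : IsUnit (truncate (n + 1) (1 + η)) := by
  set r := η.shift n
  have hηr : η = verschiebung^[n] r := eq_iterate_verschiebung ((mem_ker_truncate n η).1 hη)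
  have hunit : IsUnit ((p : R) ^ n * r.coeff 0 + 1) :=
    Ideal.mem_jacobson_bot.mp (Ideal.pow_mem_of_mem _ hp n (Nat.pos_of_ne_zero hn)) _
  obtain ⟨t, ht⟩ := hunit.exists_right_inv
  set s := teichmuller p (-(r.coeff 0 * t))
  have hprod : (1 + η) * (1 + verschiebung^[n] s) =
      1 + verschiebung^[n] (r + s + r * s * (p : 𝕎 R) ^ n) := by
    rw [hηr, iterate_map_add, iterate_map_add, ← iterate_verschiebung_mul_iterate_verschiebung]
    ring
  have hcoeff : (r + s + r * s * (p : 𝕎 R) ^ n).coeff 0 = 0 := by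
    rw [← constantCoeff_apply]
    simp only [map_add, map_mul, map_pow, map_natCast, constantCoeff_apply, s,
      teichmuller_coeff_zero]
    linear_combination (-r.coeff 0) * ht
  refine IsUnit.of_mul_eq_one (truncate (n + 1) (1 + verschiebung^[n] s)) ?_
  rw [← map_mul, hprod, map_add, iterate_verschiebung_mem_ker_truncate_succ hcoeff n, add_zero,
    map_one]

theorem isUnit_truncate_succ {n : ℕ} (hn : n ≠ 0) {x : 𝕎 R} (hx : IsUnit (truncate n x)) :
    IsUnit (truncate (n + 1) x) := by
  obtain ⟨u, hu⟩ := hx.exists_right_inv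
  obtain ⟨y, rfl⟩ := truncate_surjective p n R u
  have hxy : x * y - 1 ∈ RingHom.ker (truncate n) := by
    rw [RingHom.mem_ker, map_sub, map_mul, hu, map_one, sub_self]
  have := isUnit_truncate_succ_one_add hp hn hxy
  rw [add_sub_cancel, map_mul] at this
  exact isUnit_of_mul_isUnit_left this

theorem isUnit_of_isUnit_coeff_zero {x : 𝕎 R} (hx : IsUnit (x.coeff 0)) : IsUnit x := by
  have isUnit_truncate_add_one (n : ℕ) : IsUnit (truncate (n + 1) x) := by
    induction n with
    | zero => exact isUnit_truncate_one hx
    | succ n ih => exact isUnit_truncate_succ hp n.succ_ne_zero ih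
  refine isUnit_of_forall_isUnit_truncate fun n => ?_
  simpa using (isUnit_truncate_add_one n).map (TruncatedWittVector.truncate n.le_succ)

end WittVector

/-- Lemma 2.1(i): if `p` lies in the Jacobson radical of `R` and the ideal of `R`
generated by the image of an ideal `𝒜 ⊆ W(R)` under the zeroth ghost component
is all of `R`, then `𝒜 = W(R)`. -/
theorem witt_ideal_eq_top_of_jacobson
    (p : ℕ) [Fact p.Prime] (R : Type*) [CommRing R]
    (hp : (p : R) ∈ Ideal.jacobson (⊥ : Ideal R))
    (𝒜 : Ideal (WittVector p R))
    (h : Ideal.span ((WittVector.ghostComponent 0 : WittVector p R →+* R) ''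
        (𝒜 : Set (WittVector p R))) = ⊤) :
    𝒜 = ⊤ := by
  rw [WittVector.ghostComponent_zero_eq_constantCoeff] at h
  have one_mem : (1 : R) ∈ 𝒜.map WittVector.constantCoeff := by
    rw [Ideal.map, h]
    exact Submodule.mem_top
  obtain ⟨z, hz𝒜, hz⟩ :=
    (Ideal.mem_map_iff_of_surjective _ (WittVector.constantCoeff_surjective p)).mp one_mem
  refine Ideal.eq_top_of_isUnit_mem 𝒜 hz𝒜 (WittVector.isUnit_of_isUnit_coeff_zero hp ?_)
  rw [← WittVector.constantCoeff_apply, hz]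
  exact isUnit_one
end

section
/- Let p be a prime, R a commutative ring, and n ≥ 1 a natural number. Let 𝒜 ⊆ W_n(R) be an ideal of the ring of p-typical Witt vectors of length n such that for every k with 0 ≤ k < n, the ideal of R generated by the image w_k(𝒜) of 𝒜 under the k-th ghost component equals R. Then 𝒜 = W_n(R). (Equivalently: if 𝒜 is an ideal of W(R) containing the kernel {x ∈ W(R) : x_i = 0 for all i < n} of the truncation map W(R) → W_n(R), and for every 0 ≤ k < n the ideal generated by w_k(𝒜) equals R, then 𝒜 = W(R).) -/
namespace WittTruncatedAux

open WittVector Function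

variable {p : ℕ} [hp : Fact p.Prime] {R : Type*} [CommRing R]

lemma ghostComponent_zero_eq (x : WittVector p R) :
    WittVector.ghostComponent 0 x = x.coeff 0 := by
  simp [WittVector.ghostComponent_apply, wittPolynomial_zero]

lemma coeff_zero_iterate_frobenius (k : ℕ) (x : WittVector p R) :
    ((WittVector.frobenius)^[k] x).coeff 0 = WittVector.ghostComponent k x := by
  rw [← ghostComponent_zero_eq]
  induction k generalizing x with
  | zero => simp
  | succ k ih =>
    rw [Function.iterate_succ_apply, ih, WittVector.ghostComponent_frobenius]

lemma iterate_verschiebung_coeff_lt (k i : ℕ) (hik : i < k) (x : WittVector p R) :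
    ((WittVector.verschiebung)^[k] x).coeff i = 0 := by
  induction k generalizing i x with
  | zero => omega
  | succ k ih =>
    rw [Function.iterate_succ_apply']
    cases i with
    | zero => exact WittVector.verschiebung_coeff_zero _
    | succ i =>
      rw [WittVector.verschiebung_coeff_succ]
      exact ih i (by omega) x

lemma step (𝒜 : Ideal (WittVector p R)) (k : ℕ)
    (h : Ideal.span ((WittVector.ghostComponent k : WittVector p R →+* R) ''
        (𝒜 : Set (WittVector p R))) = ⊤) (c : R) :
    ∃ z : WittVector p R, (WittVector.verschiebung)^[k] z ∈ 𝒜 ∧ z.coeff 0 = c := by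
  have hc : c ∈ Ideal.span ((WittVector.ghostComponent k : WittVector p R →+* R) ''
      (𝒜 : Set (WittVector p R))) := by rw [h]; trivial
  rw [Ideal.span, Submodule.mem_span_set] at hc
  obtain ⟨f, hsupp, hsum⟩ := hc
  subst hsum
  set P : R → Prop := fun c => ∃ z : WittVector p R,
    (WittVector.verschiebung)^[k] z ∈ 𝒜 ∧ z.coeff 0 = c with hP
  show P _
  rw [Finsupp.sum]
  refine Finset.sum_induction _ P ?_ ?_ ?_
  · rintro a b ⟨z1, hz1, hz1c⟩ ⟨z2, hz2, hz2c⟩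
    refine ⟨z1 + z2, ?_, ?_⟩
    · rw [iterate_map_add]
      exact 𝒜.add_mem hz1 hz2
    · rw [← hz1c, ← hz2c]
      exact map_add (WittVector.constantCoeff) z1 z2
  · exact ⟨0, by rw [iterate_map_zero]; exact 𝒜.zero_mem,
      WittVector.zero_coeff p R 0⟩
  · intro x hx
    obtain ⟨a, ha, rfl⟩ := hsupp hx
    refine ⟨WittVector.teichmuller p (f (WittVector.ghostComponent k a)) *
      (WittVector.frobenius)^[k] a, ?_, ?_⟩
    · rw [← WittVector.iterate_verschiebung_mul_left]
      exact 𝒜.mul_mem_left _ ha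
    · rw [WittVector.mul_coeff_zero, WittVector.teichmuller_coeff_zero,
        coeff_zero_iterate_frobenius, smul_eq_mul]

end WittTruncatedAux

/-- Lemma 2.1(ii): if `𝒜` is an ideal of `W(R)` containing the kernel of the
truncation map `W(R) → W_n(R)` (with `n ≥ 1`) and for every `0 ≤ k < n` the
ideal of `R` generated by the image of `𝒜` under the `k`-th ghost component is
all of `R`, then `𝒜 = W(R)`. -/
theorem witt_truncated_ideal_eq_top
    (p : ℕ) [Fact p.Prime] (R : Type*) [CommRing R] (n : ℕ) (hn : 1 ≤ n)
    (𝒜 : Ideal (WittVector p R))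
    (hker : RingHom.ker (WittVector.truncate (p := p) (R := R) n) ≤ 𝒜)
    (h : ∀ k < n, Ideal.span ((WittVector.ghostComponent k : WittVector p R →+* R) ''
        (𝒜 : Set (WittVector p R))) = ⊤) :
    𝒜 = ⊤ := by
  rw [Ideal.eq_top_iff_one]
  suffices H : ∀ k ≤ n, ∃ a ∈ 𝒜, ∀ i < k, ((1 : WittVector p R) - a).coeff i = 0 by
    obtain ⟨a, ha, hcoeff⟩ := H n le_rfl
    have h1 : (1 : WittVector p R) - a ∈ 𝒜 :=
      hker ((WittVector.mem_ker_truncate _ _).2 hcoeff)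
    simpa using 𝒜.add_mem h1 ha
  intro k
  induction k with
  | zero => exact fun _ => ⟨0, 𝒜.zero_mem, fun i hi => by omega⟩
  | succ k ih =>
    intro hk
    obtain ⟨a, ha, hc⟩ := ih (by omega)
    set x : WittVector p R := 1 - a with hxdef
    have hx : x = (WittVector.verschiebung)^[k] (x.shift k) :=
      WittVector.eq_iterate_verschiebung hc
    obtain ⟨z, hz𝒜, hz0⟩ :=
      WittTruncatedAux.step 𝒜 k (h k (by omega)) ((x.shift k).coeff 0)
    refine ⟨a + (WittVector.verschiebung)^[k] z,
      𝒜.add_mem ha hz𝒜, ?_⟩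
    have key : (1 : WittVector p R) - (a + (WittVector.verschiebung)^[k] z) =
        (WittVector.verschiebung)^[k] (x.shift k - z) := by
      rw [iterate_map_sub, ← hx, hxdef]
      ring
    rw [key]
    intro i hi
    rcases Nat.lt_or_ge i k with hik | hik
    · exact WittTruncatedAux.iterate_verschiebung_coeff_lt k i hik _
    · have hieq : i = k := by omega
      subst hieq
      have := WittVector.iterate_verschiebung_coeff (x.shift i - z) i 0
      rw [zero_add] at this
      have hsub : (x.shift i - z).coeff 0 = (x.shift i).coeff 0 - z.coeff 0 := by
        have := map_sub (WittVector.constantCoeff (p := p) (R := R)) (x.shift i) z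
        simpa [WittVector.constantCoeff_apply] using this
      rw [this, hsub, hz0, sub_self]
end

section
/- Let p be a prime, B a commutative ring, and I ⊆ B an ideal with I^r = 0 for some r ≥ 1. Then the kernel of the induced ring homomorphism W(B) → W(B/I) on p-typical Witt vectors (which consists of the Witt vectors all of whose coefficients lie in I) satisfies (ker(W(B) → W(B/I)))^r = 0. In particular, the kernel of W(B) → W(B/I) is a nilpotent ideal whenever I is nilpotent. -/
open MvPolynomial

/-- Evaluating a monomial at variables (where all relevant substitutions are variables)
gives back the monomial. -/
private lemma aux_aeval_monomial_eq {σ R : Type*} [CommRing R]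
    {g : σ → MvPolynomial σ R} {d : σ →₀ ℕ}
    (hg : ∀ v ∈ d.support, g v = X v) (c : R) :
    aeval g (monomial d c) = monomial d c := by
  rw [aeval_monomial, monomial_eq, algebraMap_eq]
  congr 1
  refine Finset.prod_congr rfl ?_
  intro v hv
  simp only [hg v hv]

/-- If a polynomial vanishes when the variables in `s` are set to `0`, then every monomial
in its support involves a variable in `s`. -/
private lemma aux_mem_span {σ R : Type*} [CommRing R] {s : Set σ}
    {g : σ → MvPolynomial σ R}
    (hg0 : ∀ v ∈ s, g v = 0) (hg1 : ∀ v, v ∉ s → g v = X v)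
    {P : MvPolynomial σ R} (h : aeval g P = 0) :
    ∀ m ∈ P.support, ∃ v ∈ s, (m : σ →₀ ℕ) v ≠ 0 := by
  classical
  intro m hm
  by_contra hc
  push_neg at hc
  apply mem_support_iff.mp hm
  have key : coeff m (aeval g P) = coeff m P := by
    conv_lhs => rw [P.as_sum]
    rw [map_sum, coeff_sum]
    rw [Finset.sum_eq_single m]
    · have : ∀ v ∈ m.support, g v = X v := by
        intro v hv
        by_cases hvs : v ∈ s
        · exact absurd (hc v hvs) (Finsupp.mem_support_iff.mp hv)
        · exact hg1 v hvs
      rw [aux_aeval_monomial_eq this, coeff_monomial, if_pos rfl]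
    · intro d _ hdm
      by_cases hds : ∃ v ∈ s, d v ≠ 0
      · obtain ⟨v, hvs, hv⟩ := hds
        rw [aeval_monomial]
        have : (d.prod fun i k => g i ^ k) = 0 := by
          refine Finset.prod_eq_zero (Finsupp.mem_support_iff.mpr hv) ?_
          simp only [hg0 v hvs, zero_pow hv]
        rw [this, mul_zero, coeff_zero]
      · push_neg at hds
        have : ∀ v ∈ d.support, g v = X v := by
          intro v hv
          by_cases hvs : v ∈ s
          · exact absurd (hds v hvs) (Finsupp.mem_support_iff.mp hv)
          · exact hg1 v hvs
        rw [aux_aeval_monomial_eq this, coeff_monomial, if_neg hdm]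
    · intro hmm
      exact absurd hm hmm
  rw [h, coeff_zero] at key
  exact key.symm

/-- If every monomial of `P` involves a variable of `s` and a variable of `t` (with `s`, `t`
disjoint), and the substitutions land in `I₁` resp. `I₂`, then the evaluation lies in
`I₁ * I₂`. -/
private lemma aux_eval_mem {σ B : Type*} [CommRing B] {P : MvPolynomial σ ℤ}
    {s t : Set σ} (hst : ∀ v, ¬(v ∈ s ∧ v ∈ t))
    (h0 : ∀ m ∈ P.support, ∃ v ∈ s, (m : σ →₀ ℕ) v ≠ 0)
    (h1 : ∀ m ∈ P.support, ∃ v ∈ t, (m : σ →₀ ℕ) v ≠ 0)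
    {f : σ → B} {I₁ I₂ : Ideal B}
    (hf0 : ∀ v ∈ s, f v ∈ I₁) (hf1 : ∀ v ∈ t, f v ∈ I₂) :
    aeval f P ∈ I₁ * I₂ := by
  classical
  have hPs : aeval f P = ∑ d ∈ P.support, aeval f (monomial d (coeff d P)) := by
    conv_lhs => rw [P.as_sum]
    rw [map_sum]
  rw [hPs]
  refine Ideal.sum_mem _ ?_
  intro d hd
  obtain ⟨v₀, hv₀s, hv₀⟩ := h0 d hd
  obtain ⟨v₁, hv₁t, hv₁⟩ := h1 d hd
  have hne : v₁ ≠ v₀ := fun h => hst v₀ ⟨hv₀s, h ▸ hv₁t⟩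
  rw [aeval_monomial]
  refine Ideal.mul_mem_left _ _ ?_
  have hv₀m : v₀ ∈ d.support := Finsupp.mem_support_iff.mpr hv₀
  have hv₁m : v₁ ∈ d.support.erase v₀ :=
    Finset.mem_erase.mpr ⟨hne, Finsupp.mem_support_iff.mpr hv₁⟩
  rw [Finsupp.prod, ← Finset.mul_prod_erase _ _ hv₀m, ← Finset.mul_prod_erase _ _ hv₁m,
    ← mul_assoc] <;> try skip
  refine Ideal.mul_mem_right _ _ ?_
  exact Ideal.mul_mem_mul (I₁.pow_mem_of_mem (hf0 v₀ hv₀s) _ (Nat.pos_of_ne_zero hv₀))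
    (I₂.pow_mem_of_mem (hf1 v₁ hv₁t) _ (Nat.pos_of_ne_zero hv₁))

/-- If `P` has zero constant coefficient and all substitutions lie in `J`, then the
evaluation lies in `J`. -/
private lemma aux_eval_mem_one {σ B : Type*} [CommRing B] {P : MvPolynomial σ ℤ}
    (h : constantCoeff P = 0) {f : σ → B} {J : Ideal B} (hf : ∀ v, f v ∈ J) :
    aeval f P ∈ J := by
  classical
  have hPs : aeval f P = ∑ d ∈ P.support, aeval f (monomial d (coeff d P)) := by
    conv_lhs => rw [P.as_sum]
    rw [map_sum]
  rw [hPs]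
  refine Ideal.sum_mem _ ?_
  intro d hd
  have hd0 : d ≠ 0 := by
    rintro rfl
    exact mem_support_iff.mp hd (by rwa [constantCoeff_eq] at h)
  obtain ⟨v, hv⟩ := Finsupp.ne_iff.mp hd0
  rw [Finsupp.coe_zero, Pi.zero_apply] at hv
  have hvm : v ∈ d.support := Finsupp.mem_support_iff.mpr hv
  rw [aeval_monomial]
  refine Ideal.mul_mem_left _ _ ?_
  rw [Finsupp.prod, ← Finset.mul_prod_erase _ _ hvm]
  exact Ideal.mul_mem_right _ _ (J.pow_mem_of_mem (hf v) _ (Nat.pos_of_ne_zero hv))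

private lemma witt_mul_coeff_mem (p : ℕ) [Fact p.Prime] {B : Type*} [CommRing B]
    (x y : WittVector p B) (I₁ I₂ : Ideal B)
    (hx : ∀ n, x.coeff n ∈ I₁) (hy : ∀ n, y.coeff n ∈ I₂) (n : ℕ) :
    (x * y).coeff n ∈ I₁ * I₂ := by
  rw [WittVector.mul_coeff]
  show aeval (Function.uncurry ![x.coeff, y.coeff]) (WittVector.wittMul p n) ∈ I₁ * I₂
  set R := MvPolynomial (Fin 2 × ℕ) ℤ
  -- every monomial of wittMul involves a variable from block 0
  have h0 : ∀ m ∈ (WittVector.wittMul p n).support, ∃ v ∈ {v : Fin 2 × ℕ | v.1 = 0}, m v ≠ 0 := by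
    have hz : ((0 : WittVector p R) *
        WittVector.mk p (fun j => X ((1 : Fin 2), j))).coeff n = 0 := by
      rw [zero_mul, WittVector.zero_coeff]
    rw [WittVector.mul_coeff] at hz
    refine aux_mem_span (g := Function.uncurry
        ![(0 : WittVector p R).coeff, (WittVector.mk p (fun j => X ((1 : Fin 2), j))).coeff])
        ?_ ?_ hz
    · rintro ⟨i, j⟩ hi
      simp only [Set.mem_setOf_eq] at hi
      subst hi
      simp [Function.uncurry, WittVector.zero_coeff]
    · rintro ⟨i, j⟩ hi
      fin_cases i
      · exact absurd rfl hi
      · simp [Function.uncurry, WittVector.coeff_mk]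
  -- every monomial of wittMul involves a variable from block 1
  have h1 : ∀ m ∈ (WittVector.wittMul p n).support, ∃ v ∈ {v : Fin 2 × ℕ | v.1 = 1}, m v ≠ 0 := by
    have hz : (WittVector.mk p (fun j => X (((0 : Fin 2), j) : Fin 2 × ℕ)) *
        (0 : WittVector p R)).coeff n = 0 := by
      rw [mul_zero, WittVector.zero_coeff]
    rw [WittVector.mul_coeff] at hz
    refine aux_mem_span (g := Function.uncurry
        ![(WittVector.mk p (fun j => X (((0 : Fin 2), j) : Fin 2 × ℕ))).coeff,
          (0 : WittVector p R).coeff]) ?_ ?_ hz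
    · rintro ⟨i, j⟩ hi
      simp only [Set.mem_setOf_eq] at hi
      subst hi
      simp [Function.uncurry, WittVector.zero_coeff]
    · rintro ⟨i, j⟩ hi
      fin_cases i
      · simp [Function.uncurry, WittVector.coeff_mk]
      · exact absurd rfl hi
  refine aux_eval_mem (s := {v : Fin 2 × ℕ | v.1 = 0}) (t := {v : Fin 2 × ℕ | v.1 = 1})
      ?_ h0 h1 ?_ ?_
  · rintro ⟨i, j⟩ ⟨h1', h2'⟩
    simp only [Set.mem_setOf_eq] at h1' h2'
    rw [h1'] at h2'
    exact absurd h2' (by decide)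
  · rintro ⟨i, j⟩ hi
    simp only [Set.mem_setOf_eq] at hi
    subst hi
    simpa [Function.uncurry] using hx j
  · rintro ⟨i, j⟩ hi
    simp only [Set.mem_setOf_eq] at hi
    subst hi
    simpa [Function.uncurry] using hy j

private lemma witt_add_coeff_mem (p : ℕ) [Fact p.Prime] {B : Type*} [CommRing B]
    (x y : WittVector p B) (J : Ideal B)
    (hx : ∀ n, x.coeff n ∈ J) (hy : ∀ n, y.coeff n ∈ J) (n : ℕ) :
    (x + y).coeff n ∈ J := by
  rw [WittVector.add_coeff]
  show aeval (Function.uncurry ![x.coeff, y.coeff]) (WittVector.wittAdd p n) ∈ J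
  refine aux_eval_mem_one (WittVector.constantCoeff_wittAdd p n) ?_
  rintro ⟨i, j⟩
  fin_cases i
  · simpa [Function.uncurry] using hx j
  · simpa [Function.uncurry] using hy j

/-- If `I ⊆ B` is an ideal with `I ^ r = 0` (for some `r ≥ 1`), then the kernel of
the induced map `W(B) → W(B/I)` on `p`-typical Witt vectors satisfies
`(ker)^r = 0`. -/
theorem witt_ker_map_quotient_pow_eq_bot
    (p : ℕ) [Fact p.Prime] (B : Type*) [CommRing B]
    (I : Ideal B) (r : ℕ) (hr : 1 ≤ r) (hI : I ^ r = ⊥) :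
    (RingHom.ker (WittVector.map (p := p) (Ideal.Quotient.mk I))) ^ r = ⊥ := by
  set K := RingHom.ker (WittVector.map (p := p) (Ideal.Quotient.mk I)) with hKdef
  have hK : ∀ x ∈ K, ∀ n, x.coeff n ∈ I := by
    intro x hx n
    have h0 : WittVector.map (p := p) (Ideal.Quotient.mk I) x = 0 := RingHom.mem_ker.mp hx
    have := congrArg (fun z => WittVector.coeff z n) h0
    simpa [WittVector.map_coeff, Ideal.Quotient.eq_zero_iff_mem] using this
  have main : ∀ s : ℕ, ∀ x ∈ K ^ s, ∀ n, x.coeff n ∈ I ^ s := by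
    intro s
    induction s with
    | zero => simp
    | succ s ih =>
      intro x hx
      rw [pow_succ] at hx
      refine Submodule.mul_induction_on hx ?_ ?_
      · intro a ha b hb n
        rw [pow_succ]
        exact witt_mul_coeff_mem p a b _ _ (ih a ha) (hK b hb) n
      · intro a b ha hb n
        exact witt_add_coeff_mem p a b _ (fun m => ha m) (fun m => hb m) n
  rw [eq_bot_iff]
  intro x hx
  rw [Ideal.mem_bot]
  ext n
  rw [WittVector.zero_coeff]
  have hmem := main r x hx n
  rwa [hI, Ideal.mem_bot] at hmem
end

section
/- Let p be a prime and R a commutative ring with p^m·R = 0 for some m ≥ 1. Then p^m·x = 0 for every element x of the kernel of the induced ring homomorphism W(R) → W(R/pR) on p-typical Witt vectors. In particular, this kernel is a p-power torsion ideal of W(R). -/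
open MvPolynomial

private lemma aux_constantCoeff_frobeniusPolyAux (p : ℕ) [Fact p.Prime] (n : ℕ) :
    constantCoeff (WittVector.frobeniusPolyAux p n) = 0 := by
  induction n using Nat.strong_induction_on with
  | _ n ih =>
    rw [WittVector.frobeniusPolyAux_eq]
    rw [map_sub, map_sum, constantCoeff_X]
    rw [Finset.sum_congr rfl fun i hi => ?_, Finset.sum_const_zero, sub_zero]
    rw [map_sum, Finset.sum_congr rfl fun j _ => ?_, Finset.sum_const_zero]
    simp [map_mul, map_pow, ih i (Finset.mem_range.mp hi)]

private lemma aux_aeval_mem {R : Type*} [CommRing R] (I : Ideal R) (c : ℕ → R)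
    (hc : ∀ j, c j ∈ I) (P : MvPolynomial ℕ ℤ) (hP : constantCoeff P = 0) :
    aeval c P ∈ I := by
  rw [MvPolynomial.as_sum P, map_sum]
  apply Ideal.sum_mem
  intro d hd
  rw [MvPolynomial.aeval_monomial]
  have hd0 : d ≠ 0 := by
    rintro rfl
    rw [MvPolynomial.mem_support_iff] at hd
    exact hd hP
  obtain ⟨i, hi⟩ := Finsupp.ne_iff.mp hd0
  have hi' : i ∈ d.support := Finsupp.mem_support_iff.mpr (by simpa using hi)
  rw [Finsupp.prod, ← Finset.prod_erase_mul _ _ hi']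
  exact Ideal.mul_mem_left _ _ (Ideal.mul_mem_left _ _
    (Ideal.pow_mem_of_mem I (hc i) _ (Nat.pos_of_ne_zero hi)))

private lemma aux_coeff_mul_p_mem (p : ℕ) [Fact p.Prime] {R : Type*} [CommRing R]
    (k : ℕ) (hk : 1 ≤ k) (y : WittVector p R)
    (hy : ∀ i, y.coeff i ∈ Ideal.span {(p : R) ^ k}) (i : ℕ) :
    (y * (p : WittVector p R)).coeff i ∈ Ideal.span {(p : R) ^ (k + 1)} := by
  have hz : ∀ j, (WittVector.verschiebung y).coeff j ∈ Ideal.span {(p : R) ^ k} := by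
    intro j
    cases j with
    | zero => rw [WittVector.verschiebung_coeff_zero]; exact Ideal.zero_mem _
    | succ j => rw [WittVector.verschiebung_coeff_succ]; exact hy j
  rw [← WittVector.frobenius_verschiebung, WittVector.coeff_frobenius,
    WittVector.frobeniusPoly, map_add, map_mul, map_pow, aeval_X, aeval_C]
  apply Ideal.add_mem
  · -- `(verschiebung y).coeff i ^ p ∈ span {p ^ (k+1)}`
    simp only [Ideal.mem_span_singleton] at hz ⊢
    refine dvd_trans ?_ (pow_dvd_pow_of_dvd (hz i) p)
    rw [← pow_mul]
    exact pow_dvd_pow _ (by nlinarith [(Fact.out : p.Prime).two_le])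
  · -- `p * aeval _ (frobeniusPolyAux p i) ∈ span {p ^ (k+1)}`
    have hmem : aeval (WittVector.verschiebung y).coeff (WittVector.frobeniusPolyAux p i) ∈
        Ideal.span {(p : R) ^ k} :=
      aux_aeval_mem _ _ hz _ (aux_constantCoeff_frobeniusPolyAux p i)
    simp only [Ideal.mem_span_singleton] at hmem ⊢
    obtain ⟨r, hr⟩ := hmem
    refine ⟨r, ?_⟩
    rw [hr]
    push_cast
    ring

/-- If `p^m · R = 0` for some `m ≥ 1`, then `p^m · x = 0` for every element `x`
of the kernel of the induced map `W(R) → W(R/pR)` on `p`-typical Witt vectors. -/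
theorem witt_ker_map_mod_p_pTorsion
    (p : ℕ) [Fact p.Prime] (R : Type*) [CommRing R]
    (m : ℕ) (hm : 1 ≤ m) (hpR : (p : R) ^ m = 0) :
    ∀ x ∈ RingHom.ker
        (WittVector.map (p := p) (Ideal.Quotient.mk (Ideal.span {(p : R)}))),
      (p : WittVector p R) ^ m * x = 0 := by
  intro x hx
  have hcoeff : ∀ i, x.coeff i ∈ Ideal.span {(p : R) ^ 1} := by
    intro i
    rw [pow_one]
    rw [RingHom.mem_ker] at hx
    have := congrArg (fun z => WittVector.coeff z i) hx
    simp only [WittVector.map_coeff, WittVector.zero_coeff] at this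
    exact (Ideal.Quotient.eq_zero_iff_mem).mp this
  have H : ∀ k, ∀ i, (x * (p : WittVector p R) ^ k).coeff i ∈
      Ideal.span {(p : R) ^ (k + 1)} := by
    intro k
    induction k with
    | zero => simpa using hcoeff
    | succ k ih =>
      intro i
      rw [show ((p : WittVector p R)) ^ (k + 1) = (p : WittVector p R) ^ k * p from
        pow_succ _ _, ← mul_assoc]
      exact aux_coeff_mul_p_mem p (k + 1) (Nat.le_add_left 1 k) _ ih i
  have h0 : x * (p : WittVector p R) ^ (m - 1) = 0 := by
    apply WittVector.ext
    intro i
    have := H (m - 1) i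
    rw [Nat.sub_add_cancel hm, hpR, Ideal.span_singleton_eq_bot.mpr rfl, Ideal.mem_bot] at this
    simpa using this
  have hmm : m - 1 + 1 = m := Nat.sub_add_cancel hm
  have key : (p : WittVector p R) ^ m * x
      = x * (p : WittVector p R) ^ (m - 1) * (p : WittVector p R) := by
    conv_lhs => rw [← hmm, pow_succ]
    ring
  rw [key, h0, zero_mul]
end

section
/- Let p be a prime and A a commutative ring in which p·1_A is nilpotent, and let N ⊆ A be a nilpotent ideal. Then there exists a natural number n such that p^n·x = 0 for every element x of the kernel of the induced ring homomorphism W(A) → W(A/N) on p-typical Witt vectors. -/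
/-!
Since `x * p = F (V x)` and the `n`-th Frobenius polynomial is `X n ^ p + p * aux n` with `aux n`
having no constant term, multiplying by `p` moves a Witt vector with coefficients in an ideal
`J ⊆ M`, where `p ∈ M`, to one with coefficients in `J * M`. Taking `M = (p) + N`, which is
nilpotent, `p ^ m` kills the kernel as soon as `M ^ m = 0`.
-/

open MvPolynomial

theorem MvPolynomial.aeval_mem_of_constantCoeff_eq_zero {R A σ : Type*} [CommRing R] [CommRing A]
    [Algebra R A] {φ : MvPolynomial σ R} (hφ : constantCoeff φ = 0) {f : σ → A} {J : Ideal A}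
    (hf : ∀ i, f i ∈ J) : aeval f φ ∈ J := by
  have hf0 : (fun i ↦ Ideal.Quotient.mkₐ R J (f i)) = fun _ ↦ 0 :=
    _root_.funext fun i ↦ Ideal.Quotient.eq_zero_iff_mem.mpr (hf i)
  rw [← Ideal.Quotient.eq_zero_iff_mem, ← Ideal.Quotient.mkₐ_eq_mk R, comp_aeval_apply, hf0,
    aeval_zero', hφ, map_zero]

theorem Ideal.isNilpotent_span_singleton {R : Type*} [CommRing R] {a : R} (ha : IsNilpotent a) :
    IsNilpotent (Ideal.span {a}) := by
  obtain ⟨m, hm⟩ := ha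
  refine ⟨m, ?_⟩
  rw [Ideal.span_singleton_pow, hm, Ideal.span_singleton_eq_bot.mpr rfl, Ideal.zero_eq_bot]

namespace WittVector

variable {p : ℕ}

theorem constantCoeff_frobeniusPolyAux (n : ℕ) :
    MvPolynomial.constantCoeff (frobeniusPolyAux p n) = 0 := by
  induction n using Nat.strong_induction_on with
  | _ n ih =>
    rw [frobeniusPolyAux_eq]
    simp only [map_sub, map_sum, map_mul, map_pow, constantCoeff_X, zero_sub, neg_eq_zero]
    refine Finset.sum_eq_zero fun i hi ↦ Finset.sum_eq_zero fun j _ ↦ ?_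
    rw [ih i (Finset.mem_range.mp hi)]
    simp

variable [Fact p.Prime] {A : Type*} [CommRing A]

theorem coeff_frobenius_mem_mul {J M : Ideal A} (hJM : J ≤ M) (hpM : (p : A) ∈ M)
    {y : WittVector p A} (hy : ∀ n, y.coeff n ∈ J) (n : ℕ) :
    (frobenius y).coeff n ∈ J * M := by
  rw [coeff_frobenius, frobeniusPoly, map_add, map_mul, map_pow, aeval_X, aeval_C,
    algebraMap_int_eq, eq_intCast, Int.cast_natCast]
  refine add_mem ?_ (mul_comm (p : A) _ ▸ Ideal.mul_mem_mul ?_ hpM)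
  · have hJp : J ^ p ≤ J * M := (Ideal.pow_le_pow_right (Fact.out : p.Prime).two_le).trans
      (pow_two J ▸ Ideal.mul_mono_right hJM)
    exact hJp (Ideal.pow_mem_pow (hy n) p)
  · exact aeval_mem_of_constantCoeff_eq_zero (constantCoeff_frobeniusPolyAux n) hy

theorem coeff_mul_p_mem_mul {J M : Ideal A} (hJM : J ≤ M) (hpM : (p : A) ∈ M)
    {x : WittVector p A} (hx : ∀ n, x.coeff n ∈ J) (n : ℕ) : (x * p).coeff n ∈ J * M := by
  rw [← frobenius_verschiebung]
  refine coeff_frobenius_mem_mul hJM hpM (fun k ↦ ?_) n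
  cases k with
  | zero => simp only [verschiebung_coeff_zero, zero_mem]
  | succ k => simpa only [verschiebung_coeff_succ] using hx k

theorem coeff_p_pow_mul_mem_mul_pow {J M : Ideal A} (hJM : J ≤ M) (hpM : (p : A) ∈ M)
    {x : WittVector p A} (hx : ∀ n, x.coeff n ∈ J) (k n : ℕ) :
    ((p : WittVector p A) ^ k * x).coeff n ∈ J * M ^ k := by
  induction k generalizing n with
  | zero => simpa using hx n
  | succ k ih =>
    rw [show (p : WittVector p A) ^ (k + 1) * x = p ^ k * x * p by ring, pow_succ, ← mul_assoc]
    exact coeff_mul_p_mem_mul (Ideal.mul_le_left.trans hJM) hpM ih n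

theorem mem_ker_map_iff {B : Type*} [CommRing B] {f : A →+* B} {x : WittVector p A} :
    x ∈ RingHom.ker (map (p := p) f) ↔ ∀ n, x.coeff n ∈ RingHom.ker f := by
  simp only [RingHom.mem_ker, WittVector.ext_iff, map_coeff, zero_coeff]

end WittVector

/-- If `p` is nilpotent in `A` and `N ⊆ A` is a nilpotent ideal, then there is an
`n` with `p^n · x = 0` for every `x` in the kernel of the induced map
`W(A) → W(A/N)` on `p`-typical Witt vectors. -/
theorem witt_ker_map_nilpotent_pPowerTorsion
    (p : ℕ) [Fact p.Prime] (A : Type*) [CommRing A]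
    (hpA : IsNilpotent (p : A)) (N : Ideal A) (hN : IsNilpotent N) :
    ∃ n : ℕ, ∀ x ∈ RingHom.ker (WittVector.map (p := p) (Ideal.Quotient.mk N)),
      (p : WittVector p A) ^ n * x = 0 := by
  obtain ⟨m, hm⟩ : IsNilpotent (Ideal.span {(p : A)} ⊔ N) :=
    (Commute.all _ _).isNilpotent_add (Ideal.isNilpotent_span_singleton hpA) hN
  refine ⟨m, fun x hx ↦ WittVector.ext fun n ↦ ?_⟩
  have hxN : ∀ n, x.coeff n ∈ N := Ideal.mk_ker (I := N) ▸ WittVector.mem_ker_map_iff.mp hx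
  have h := WittVector.coeff_p_pow_mul_mem_mul_pow le_sup_right
    (Ideal.mem_sup_left (Ideal.mem_span_singleton_self _)) hxN m n
  rw [hm, mul_zero, Ideal.zero_eq_bot, Ideal.mem_bot] at h
  rw [h, WittVector.zero_coeff]
end

section
/- Let p be a prime and B a commutative ring with p·B = 0 (i.e. of characteristic p). Then for every x ∈ W(B) and every n ≥ 0, one has p^n·x = 0 in W(B) if and only if x_i^{p^n} = 0 in B for every coefficient x_i of x. Equivalently, the p^n-torsion subgroup W(B)[p^n] of W(B) equals the kernel of W(B) → W(B/J_n), where J_n = {b ∈ B : b^{p^n} = 0}. -/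
section aux

variable (p : ℕ) [Fact p.Prime] (B : Type*) [CommRing B] [CharP B p]

private theorem witt_aux_coeff_add (x : WittVector p B) (n : ℕ) :
    ∀ k : ℕ, (x * (p : WittVector p B) ^ n).coeff (k + n) = x.coeff k ^ p ^ n := by
  induction n generalizing x with
  | zero => intro k; simp
  | succ n ih =>
    intro k
    have : x * (p : WittVector p B) ^ (n + 1) = (x * p) * (p : WittVector p B) ^ n := by
      ring
    rw [this]
    have h : k + (n + 1) = (k + 1) + n := by ring
    rw [h, ih (x * p) (k + 1), WittVector.mul_charP_coeff_succ, ← pow_mul, pow_succ',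
      pow_mul]

private theorem witt_aux_coeff_lt (x : WittVector p B) (n : ℕ) :
    ∀ k : ℕ, k < n → (x * (p : WittVector p B) ^ n).coeff k = 0 := by
  induction n generalizing x with
  | zero => intro k hk; omega
  | succ n ih =>
    intro k hk
    have : x * (p : WittVector p B) ^ (n + 1) = (x * p) * (p : WittVector p B) ^ n := by
      ring
    rw [this]
    rcases lt_or_ge k n with h | h
    · exact ih (x * p) k h
    · have hk' : k = n := by omega
      subst hk'
      have := witt_aux_coeff_add p B (x * p) k 0
      simpa [WittVector.mul_charP_coeff_zero,
        zero_pow (pow_ne_zero k (Fact.out : p.Prime).ne_zero)] using this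

end aux

/-- For a ring `B` of characteristic `p` (`p · B = 0`), an element `x ∈ W(B)`
satisfies `p^n · x = 0` if and only if every coefficient `x_i` of `x` satisfies
`x_i^{p^n} = 0`. -/
theorem witt_pPow_torsion_iff
    (p : ℕ) [Fact p.Prime] (B : Type*) [CommRing B] (hpB : (p : B) = 0)
    (x : WittVector p B) (n : ℕ) :
    (p : WittVector p B) ^ n * x = 0 ↔ ∀ i : ℕ, (x.coeff i) ^ (p ^ n) = 0 := by
  rcases subsingleton_or_nontrivial B with hB | hB
  · constructor
    · intro _ i; exact Subsingleton.elim _ _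
    · intro _
      have : Subsingleton (WittVector p B) :=
        ⟨fun a b => by ext i; exact Subsingleton.elim _ _⟩
      exact Subsingleton.elim _ _
  · haveI : CharP B p := (CharP.charP_iff_prime_eq_zero (Fact.out : p.Prime)).2 hpB
    rw [mul_comm]
    constructor
    · intro h i
      have := witt_aux_coeff_add p B x n i
      rw [h, WittVector.zero_coeff] at this
      exact this.symm
    · intro h
      ext k
      rw [WittVector.zero_coeff]
      rcases lt_or_ge k n with hk | hk
      · exact witt_aux_coeff_lt p B x n k hk
      · obtain ⟨i, rfl⟩ : ∃ i, k = i + n := ⟨k - n, by omega⟩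
        rw [witt_aux_coeff_add p B x n i]
        exact h i
end

section
/- Let p be a prime and K an algebraically closed field of characteristic p. Let ι : W(K[[t]]) → W(K((t))) be the injective ring homomorphism of p-typical Witt vector rings induced by the inclusion of the power series ring K[[t]] into the Laurent series field K((t)). If x ∈ W(K((t))) and p^n·x lies in the image of ι for some n ≥ 0, then x lies in the image of ι. (Equivalently, W(K((t))) ∩ W(K[[t]])[1/p] = W(K[[t]]) inside W(K((t)))[1/p].) -/
/-!
In characteristic `p`, the `(i + n)`-th Witt coefficient of `p^n * x` is the `p^n`-th power of the
`i`-th coefficient of `x`, so every coefficient of `x` has a power that is a power series.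
Since `K[[t]]` is integrally closed in its fraction field `K((t))`, the coefficients of `x` are
power series themselves.
-/

open HahnSeries

namespace WittVector

variable {p : ℕ} [Fact p.Prime] {R S : Type*} [CommRing R] [CommRing S]

theorem mem_range_map_iff {f : R →+* S} {x : WittVector p S} :
    x ∈ (map f).range ↔ ∀ i, x.coeff i ∈ Set.range f := by
  refine ⟨?_, fun hx => ?_⟩
  · rintro ⟨y, rfl⟩ i
    exact ⟨y.coeff i, (map_coeff f y i).symm⟩
  · choose a ha using hx
    exact ⟨mk p a, ext fun i => by rw [map_coeff, coeff_mk, ha]⟩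

theorem mem_range_map_of_natCast_pow_mul_mem [CharP S p] {f : R →+* S} {n : ℕ}
    (hf : ∀ z : S, z ^ p ^ n ∈ Set.range f → z ∈ Set.range f) {x : WittVector p S}
    (h : (p : WittVector p S) ^ n * x ∈ (map f).range) : x ∈ (map f).range := by
  rw [mem_range_map_iff] at h ⊢
  intro i
  apply hf
  rw [← mul_pow_charP_coeff_succ, mul_comm]
  exact h (i + n)

end WittVector

theorem LaurentSeries.mem_range_ofPowerSeries_of_pow_mem {K : Type*} [Field K]
    {z : LaurentSeries K} {k : ℕ} (hk : k ≠ 0) (h : z ^ k ∈ Set.range (ofPowerSeries ℤ K)) :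
    z ∈ Set.range (ofPowerSeries ℤ K) :=
  have ⟨_, hy⟩ := h
  IsIntegrallyClosedIn.exists_algebraMap_eq_of_isIntegral_pow (R := PowerSeries K) hk.bot_lt
    (hy ▸ isIntegral_algebraMap)

theorem witt_laurent_powerSeries_saturated_general
    (p : ℕ) [Fact p.Prime] (K : Type*) [Field K] [CharP K p]
    (x : WittVector p (LaurentSeries K)) (n : ℕ)
    (h : (p : WittVector p (LaurentSeries K)) ^ n * x ∈
      (WittVector.map (p := p) (HahnSeries.ofPowerSeries ℤ K)).range) :
    x ∈ (WittVector.map (p := p) (HahnSeries.ofPowerSeries ℤ K)).range := by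
  have : CharP (LaurentSeries K) p := charP_of_injective_ringHom (C_injective (Γ := ℤ)) p
  refine WittVector.mem_range_map_of_natCast_pow_mul_mem (fun z hz => ?_) h
  exact LaurentSeries.mem_range_ofPowerSeries_of_pow_mem
    (pow_ne_zero n (Fact.out : p.Prime).ne_zero) hz

/-- Let `K` be an algebraically closed field of characteristic `p` and let
`ι : W(K[[t]]) → W(K((t)))` be induced by the inclusion `K[[t]] ↪ K((t))`.
If `p^n · x` lies in the image of `ι` for some `x ∈ W(K((t)))`, then `x` lies
in the image of `ι`; i.e. `W(K((t))) ∩ W(K[[t]])[1/p] = W(K[[t]])`. -/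
theorem witt_laurent_powerSeries_saturated
    (p : ℕ) [Fact p.Prime] (K : Type*) [Field K] [IsAlgClosed K] [CharP K p]
    (x : WittVector p (LaurentSeries K)) (n : ℕ)
    (h : (p : WittVector p (LaurentSeries K)) ^ n * x ∈
      (WittVector.map (p := p) (HahnSeries.ofPowerSeries ℤ K)).range) :
    x ∈ (WittVector.map (p := p) (HahnSeries.ofPowerSeries ℤ K)).range :=
  witt_laurent_powerSeries_saturated_general p K x n h
end

section
/- Let p be a prime and let A be a commutative ring that is almost Frobenius separated, i.e. there exists a nilpotent ideal 𝔫 of A with p·1_A ∈ 𝔫 such that A/𝔫 is Frobenius separated. Let 𝔞 ⊆ A be an ideal that is idempotent (𝔞 = 𝔞²) and bounded nilpotent (there exists m ≥ 1 with x^m = 0 for all x ∈ 𝔞). Then 𝔞 = 0. -/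
/-- The ideal `ker(F_R^n) = {x : R | x^(p^n) = 0}` of a ring of characteristic `p`
(realized as the ideal generated by that set). -/
def frobeniusPowerKernel (p : ℕ) (R : Type*) [CommRing R] (n : ℕ) : Ideal R :=
  Ideal.span {x : R | x ^ p ^ n = 0}

/-- A ring `R` (of characteristic `p`) is Frobenius separated if for every `n ≥ 1`
the intersection of all powers of `ker(F_R^n)` is zero. -/
def IsFrobeniusSeparated (p : ℕ) (R : Type*) [CommRing R] : Prop :=
  ∀ n : ℕ, 1 ≤ n → (⨅ m ≥ 1, frobeniusPowerKernel p R n ^ m) = ⊥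

/-- A ring `R` is almost Frobenius separated if there is a nilpotent ideal `𝔞`
containing `p` such that `R/𝔞` is Frobenius separated. -/
def IsAlmostFrobeniusSeparated (p : ℕ) (R : Type*) [CommRing R] : Prop :=
  ∃ 𝔞 : Ideal R, IsNilpotent 𝔞 ∧ (p : R) ∈ 𝔞 ∧ IsFrobeniusSeparated p (R ⧸ 𝔞)

/-!
An idempotent ideal equals each of its powers. Modulo `𝔫` the image of `𝔞` is killed by `F^m`
(as `m ≤ p ^ m`), so it lies in every power of `ker F^m` and vanishes by Frobenius separatedness.
Hence `𝔞 ≤ 𝔫`, and `𝔞 = 𝔞 ^ k ≤ 𝔫 ^ k = ⊥`.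
-/

section

variable {R S : Type*} [CommRing R] [CommRing S]

theorem Ideal.map_le_frobeniusPowerKernel (p : ℕ) {n : ℕ} (f : R →+* S) {I : Ideal R}
    (hI : ∀ x ∈ I, x ^ p ^ n = 0) : I.map f ≤ frobeniusPowerKernel p S n :=
  Ideal.map_le_iff_le_comap.mpr fun x hx ↦
    Ideal.subset_span (show f x ^ p ^ n = 0 by rw [← map_pow, hI x hx, map_zero])

theorem Ideal.le_iInf_pow_of_isIdempotentElem {I J : Ideal R} (hI : IsIdempotentElem I)
    (hIJ : I ≤ J) : I ≤ ⨅ m ≥ 1, J ^ m :=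
  le_iInf₂ fun m hm ↦ (hI.pow_eq (by omega)).ge.trans (Ideal.pow_right_mono hIJ m)

theorem IsFrobeniusSeparated.eq_bot_of_le_frobeniusPowerKernel {p : ℕ}
    (hR : IsFrobeniusSeparated p R) {n : ℕ} (hn : 1 ≤ n) {I : Ideal R} (hI : IsIdempotentElem I)
    (hIK : I ≤ frobeniusPowerKernel p R n) : I = ⊥ :=
  le_bot_iff.mp (hR n hn ▸ Ideal.le_iInf_pow_of_isIdempotentElem hI hIK)

theorem Ideal.eq_bot_of_isIdempotentElem_of_le_of_isNilpotent {I N : Ideal R}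
    (hI : IsIdempotentElem I) (hIN : I ≤ N) (hN : IsNilpotent N) : I = ⊥ := by
  obtain ⟨k, hk⟩ := hN
  refine le_bot_iff.mp ?_
  calc I = I ^ (k + 1) := (hI.pow_succ_eq k).symm
    _ ≤ N ^ (k + 1) := Ideal.pow_right_mono hIN _
    _ ≤ N ^ k := Ideal.pow_le_pow_right k.le_succ
    _ = ⊥ := hk

end

/-- Lemma C.5: in an almost Frobenius separated ring, an idempotent and bounded
nilpotent ideal is zero. -/
theorem ideal_eq_bot_of_idempotent_of_boundedNilpotent
    (p : ℕ) (hp : p.Prime) (A : Type*) [CommRing A]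
    (hA : IsAlmostFrobeniusSeparated p A)
    (𝔞 : Ideal A) (hidem : 𝔞 = 𝔞 ^ 2)
    (m : ℕ) (hm : 1 ≤ m) (hbd : ∀ x ∈ 𝔞, x ^ m = 0) :
    𝔞 = ⊥ := by
  obtain ⟨𝔫, h𝔫, -, hFs⟩ := hA
  have hI : IsIdempotentElem 𝔞 := by rw [IsIdempotentElem, ← sq, ← hidem]
  have hFrob : ∀ x ∈ 𝔞, x ^ p ^ m = 0 := fun x hx ↦
    pow_eq_zero_of_le (Nat.lt_pow_self hp.one_lt).le (hbd x hx)
  have hmap : 𝔞.map (Ideal.Quotient.mk 𝔫) = ⊥ :=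
    hFs.eq_bot_of_le_frobeniusPowerKernel hm (hI.map (Ideal.mapHom (Ideal.Quotient.mk 𝔫)))
      (Ideal.map_le_frobeniusPowerKernel p _ hFrob)
  have hle : 𝔞 ≤ 𝔫 := by rwa [Ideal.map_eq_bot_iff_le_ker, Ideal.mk_ker] at hmap
  exact Ideal.eq_bot_of_isIdempotentElem_of_le_of_isNilpotent hI hle h𝔫
end

section
/- Let Γ be a group, K ≤ Γ a subgroup, and σ : Γ → Γ a group automorphism with σ(K) = K. Let μ₀ ∈ Γ, set m = σ(μ₀), and let H = K ∩ μ₀⁻¹Kμ₀. Then: (a) the subset K·m of Γ is stable under σ-conjugation by H, and the subset K·m·K is stable under σ-conjugation by K; and (b) the inclusion K·m ⊆ K·m·K induces a bijection from the set of σ-conjugacy classes of K·m under H to the set of σ-conjugacy classes of K·m·K under K. -/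
/-- `σ`-conjugation of `x` by `h`: `x ↦ h⁻¹ * x * σ h`. -/
def sigmaConj {Γ : Type*} [Group Γ] (σ : Γ ≃* Γ) (h x : Γ) : Γ :=
  h⁻¹ * x * σ h

/-- Group-theoretic content of Proposition 3.12.  Let `K ≤ Γ`, `σ` an automorphism
of `Γ` with `σ(K) = K`, `μ₀ ∈ Γ`, `m = σ μ₀`, and `H = K ∩ μ₀⁻¹ K μ₀`.  Then:
(a) the set `K·m` is stable under `σ`-conjugation by `H` and `K·m·K` is stable
under `σ`-conjugation by `K`; (b) the inclusion `K·m ⊆ K·m·K` induces a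
bijection between the set of `σ`-conjugacy classes of `K·m` under `H` and the
set of `σ`-conjugacy classes of `K·m·K` under `K`; elementwise: the class map
is injective and surjective (well-definedness being immediate from `H ⊆ K`). -/
theorem sigmaConj_classes_bijection
    {Γ : Type*} [Group Γ] (K : Subgroup Γ) (σ : Γ ≃* Γ)
    (hσK : Subgroup.map σ.toMonoidHom K = K) (μ₀ : Γ) :
    -- notation: `m = σ μ₀`, `H = K ∩ μ₀⁻¹ K μ₀`,
    -- `Km = {x | ∃ k ∈ K, x = k * m}`, `KmK = {x | ∃ k₁ ∈ K, ∃ k₂ ∈ K, x = k₁ * m * k₂}`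
    -- (a) stability:
    (∀ x : Γ, (∃ k ∈ K, x = k * σ μ₀) →
      ∀ h : Γ, h ∈ K ∧ μ₀ * h * μ₀⁻¹ ∈ K →
        ∃ k ∈ K, sigmaConj σ h x = k * σ μ₀) ∧
    (∀ x : Γ, (∃ k₁ ∈ K, ∃ k₂ ∈ K, x = k₁ * σ μ₀ * k₂) →
      ∀ k ∈ K, ∃ k₁ ∈ K, ∃ k₂ ∈ K, sigmaConj σ k x = k₁ * σ μ₀ * k₂) ∧
    -- (b) injectivity of the induced map on σ-conjugacy classes:
    (∀ x₁ : Γ, (∃ k ∈ K, x₁ = k * σ μ₀) →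
      ∀ x₂ : Γ, (∃ k ∈ K, x₂ = k * σ μ₀) →
        (∃ k ∈ K, x₂ = sigmaConj σ k x₁) →
        ∃ h : Γ, (h ∈ K ∧ μ₀ * h * μ₀⁻¹ ∈ K) ∧ x₂ = sigmaConj σ h x₁) ∧
    -- (b) surjectivity of the induced map on σ-conjugacy classes:
    (∀ y : Γ, (∃ k₁ ∈ K, ∃ k₂ ∈ K, y = k₁ * σ μ₀ * k₂) →
      ∃ x : Γ, (∃ k ∈ K, x = k * σ μ₀) ∧ ∃ k ∈ K, y = sigmaConj σ k x) := by

  have hfwd : ∀ k : Γ, k ∈ K → σ k ∈ K := fun k hk => hσK ▸ ⟨k, hk, rfl⟩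
  have hbwd : ∀ k : Γ, k ∈ K → σ.symm k ∈ K := by
    intro k hk
    rw [← hσK] at hk
    obtain ⟨y, hy, rfl⟩ := hk
    simpa using hy
  refine ⟨?_, ?_, ?_, ?_⟩
  · rintro x ⟨k, hk, rfl⟩ h ⟨hh, hh'⟩
    refine ⟨h⁻¹ * k * σ (μ₀ * h * μ₀⁻¹), ?_, ?_⟩
    · exact K.mul_mem (K.mul_mem (K.inv_mem hh) hk) (hfwd _ hh')
    · simp only [sigmaConj, map_mul, map_inv]
      group
  · rintro x ⟨k₁, hk₁, k₂, hk₂, rfl⟩ k hk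
    exact ⟨k⁻¹ * k₁, K.mul_mem (K.inv_mem hk) hk₁, k₂ * σ k,
      K.mul_mem hk₂ (hfwd _ hk), by simp [sigmaConj, mul_assoc]⟩
  · rintro x₁ ⟨k₁, hk₁, rfl⟩ x₂ ⟨k₂, hk₂, hx₂⟩ ⟨k, hk, hconj⟩
    refine ⟨k, ⟨hk, ?_⟩, hconj⟩
    have hk2 : k₂ = k⁻¹ * (k₁ * σ μ₀) * σ k * (σ μ₀)⁻¹ := by
      refine eq_mul_inv_iff_mul_eq.mpr ?_
      rw [← hx₂, hconj]; rfl
    have key : σ (μ₀ * k * μ₀⁻¹) = k₁⁻¹ * k * k₂ := by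
      simp only [map_mul, map_inv, hk2]
      group
    have : σ (μ₀ * k * μ₀⁻¹) ∈ K := key ▸ K.mul_mem (K.mul_mem (K.inv_mem hk₁) hk) hk₂
    have := hbwd _ this
    simpa using this
  · rintro y ⟨k₁, hk₁, k₂, hk₂, rfl⟩
    refine ⟨σ.symm k₂ * k₁ * σ μ₀, ⟨σ.symm k₂ * k₁,
      K.mul_mem (hbwd _ hk₂) hk₁, rfl⟩, σ.symm k₂, hbwd _ hk₂, ?_⟩
    simp [sigmaConj, mul_assoc]
end

section
/- Let Γ be a group, K ≤ Γ a subgroup, and σ : Γ → Γ a group automorphism with σ(K) = K. Let μ₀ ∈ Γ, set m = σ(μ₀), let H = K ∩ μ₀⁻¹Kμ₀, and fix b ∈ Γ. Then: (a) the set X₁ = {g ∈ Γ : g⁻¹·b·σ(g) ∈ K·m} is a union of right H-cosets and the set X₂ = {g ∈ Γ : g⁻¹·b·σ(g) ∈ K·m·K} is a union of right K-cosets; and (b) the map gH ↦ gK induces a bijection from X₁/H (the set of right H-cosets contained in X₁) onto X₂/K (the set of right K-cosets contained in X₂). -/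
/-- Group-theoretic content of Proposition 4.4.  Let `K ≤ Γ`, `σ` an automorphism
of `Γ` with `σ(K) = K`, `μ₀ ∈ Γ`, `m = σ μ₀`, `H = K ∩ μ₀⁻¹ K μ₀`, and `b ∈ Γ`.
Consider `X₁ = {g | g⁻¹ b σ(g) ∈ K·m}` and `X₂ = {g | g⁻¹ b σ(g) ∈ K·m·K}`.
Then: (a) `X₁` is a union of right `H`-cosets and `X₂` is a union of right
`K`-cosets; (b) the map `gH ↦ gK` induces a bijection `X₁/H → X₂/K`;
elementwise: the coset map is injective and surjective (well-definedness being
immediate from `H ⊆ K`). -/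
theorem adlv_cosets_bijection
    {Γ : Type*} [Group Γ] (K : Subgroup Γ) (σ : Γ ≃* Γ)
    (hσK : Subgroup.map σ.toMonoidHom K = K) (μ₀ b : Γ) :
    -- notation: `m = σ μ₀`, `H = K ∩ μ₀⁻¹ K μ₀`,
    -- `X₁ = {g | ∃ k ∈ K, g⁻¹ * b * σ g = k * m}`,
    -- `X₂ = {g | ∃ k₁ ∈ K, ∃ k₂ ∈ K, g⁻¹ * b * σ g = k₁ * m * k₂}`
    -- (a) X₁ is a union of right H-cosets:
    (∀ g : Γ, (∃ k ∈ K, g⁻¹ * b * σ g = k * σ μ₀) →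
      ∀ h : Γ, h ∈ K ∧ μ₀ * h * μ₀⁻¹ ∈ K →
        ∃ k ∈ K, (g * h)⁻¹ * b * σ (g * h) = k * σ μ₀) ∧
    -- (a) X₂ is a union of right K-cosets:
    (∀ g : Γ, (∃ k₁ ∈ K, ∃ k₂ ∈ K, g⁻¹ * b * σ g = k₁ * σ μ₀ * k₂) →
      ∀ k ∈ K, ∃ k₁ ∈ K, ∃ k₂ ∈ K,
        (g * k)⁻¹ * b * σ (g * k) = k₁ * σ μ₀ * k₂) ∧
    -- (b) injectivity of the map gH ↦ gK from X₁/H to X₂/K: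
    (∀ g₁ : Γ, (∃ k ∈ K, g₁⁻¹ * b * σ g₁ = k * σ μ₀) →
      ∀ g₂ : Γ, (∃ k ∈ K, g₂⁻¹ * b * σ g₂ = k * σ μ₀) →
        (∃ k ∈ K, g₂ = g₁ * k) →
        ∃ h : Γ, (h ∈ K ∧ μ₀ * h * μ₀⁻¹ ∈ K) ∧ g₂ = g₁ * h) ∧
    -- (b) surjectivity of the map gH ↦ gK from X₁/H to X₂/K:
    (∀ g : Γ, (∃ k₁ ∈ K, ∃ k₂ ∈ K, g⁻¹ * b * σ g = k₁ * σ μ₀ * k₂) →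
      ∃ g' : Γ, (∃ k ∈ K, g'⁻¹ * b * σ g' = k * σ μ₀) ∧ ∃ k ∈ K, g = g' * k) := by
  have hmem : ∀ x : Γ, σ x ∈ K ↔ x ∈ K := by
    intro x
    constructor
    · intro hx
      rw [← hσK] at hx
      obtain ⟨y, hy, hyx⟩ := hx
      have : y = x := σ.injective hyx
      rwa [← this]
    · intro hx
      rw [← hσK]
      exact ⟨x, hx, rfl⟩
  refine ⟨?_, ?_, ?_, ?_⟩
  · rintro g ⟨k, hk, hg⟩ h ⟨hh, hh'⟩
    refine ⟨h⁻¹ * k * σ (μ₀ * h * μ₀⁻¹), by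
      exact K.mul_mem (K.mul_mem (K.inv_mem hh) hk) ((hmem _).2 hh'), ?_⟩
    have : (g * h)⁻¹ * b * σ (g * h) = h⁻¹ * (g⁻¹ * b * σ g) * σ h := by
      simp [mul_assoc]
    rw [this, hg]
    simp only [map_mul, map_inv]
    group
  · rintro g ⟨k₁, hk₁, k₂, hk₂, hg⟩ k hk
    refine ⟨k⁻¹ * k₁, K.mul_mem (K.inv_mem hk) hk₁, k₂ * σ k,
      K.mul_mem hk₂ ((hmem _).2 hk), ?_⟩
    have : (g * k)⁻¹ * b * σ (g * k) = k⁻¹ * (g⁻¹ * b * σ g) * σ k := by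
      simp [mul_assoc]
    rw [this, hg]
    group
  · rintro g₁ ⟨k₁, hk₁, hg₁⟩ g₂ ⟨k₂, hk₂, hg₂⟩ ⟨k, hk, hkeq⟩
    refine ⟨k, ⟨hk, ?_⟩, hkeq⟩
    have h1 : g₂⁻¹ * b * σ g₂ = k⁻¹ * (g₁⁻¹ * b * σ g₁) * σ k := by
      rw [hkeq]; simp [mul_assoc]
    rw [hg₁, hg₂] at h1
    have h2 : σ (μ₀ * k * μ₀⁻¹) = k₁⁻¹ * k * k₂ := by
      have := h1
      simp only [map_mul, map_inv]
      -- from k₂ * σ μ₀ = k⁻¹ * (k₁ * σ μ₀) * σ k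
      have e : σ μ₀ * σ k * (σ μ₀)⁻¹ = k₁⁻¹ * k * k₂ := by
        have : k₁⁻¹ * k * k₂ * σ μ₀ = σ μ₀ * σ k := by
          rw [mul_assoc _ k₂ (σ μ₀), h1]; group
        calc σ μ₀ * σ k * (σ μ₀)⁻¹ = k₁⁻¹ * k * k₂ * σ μ₀ * (σ μ₀)⁻¹ := by rw [this]
          _ = k₁⁻¹ * k * k₂ := by group
      rw [← e]
    have : σ (μ₀ * k * μ₀⁻¹) ∈ K := by
      rw [h2]; exact K.mul_mem (K.mul_mem (K.inv_mem hk₁) hk) hk₂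
    exact (hmem _).1 this
  · rintro g ⟨k₁, hk₁, k₂, hk₂, hg⟩
    obtain ⟨c, hc⟩ : ∃ c : Γ, σ c = k₂ := ⟨σ.symm k₂, σ.apply_symm_apply k₂⟩
    have hcK : c ∈ K := (hmem c).1 (hc ▸ hk₂)
    refine ⟨g * c⁻¹, ⟨c * k₁, K.mul_mem hcK hk₁, ?_⟩, c, hcK, by group⟩
    have : (g * c⁻¹)⁻¹ * b * σ (g * c⁻¹) = c * (g⁻¹ * b * σ g) * (σ c)⁻¹ := by
      simp [mul_assoc]
    rw [this, hg, hc]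
    group
end
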